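/- arXiv:2004.10820 — 3 statements merged into one kernel-verified Lean document; each statement's English description precedes it below -/
import Mathlib

section
/- Let J₀, J₁ : ℝⁿ → ℝ be C² with Hessians locally Lipschitz with constant L_H on B_δ(x), set L_λ = ‖∇²J₀(x)‖ + ‖∇²J₁(x)‖, and let Λ(λ, y) be the smallest eigenvalue of ∇²J_λ(y). If 0 < ϱ < 1, x' ∈ B_δ(x), and λ, λ' ∈ [0,1] satisfy L_H‖x - x'‖ + L_λ|λ - λ'| ≤ (1 - ϱ)Λ(λ, x), then Λ(λ', x') ≥ ϱ Λ(λ, x). -/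
open scoped RealInnerProductSpace

/-- Smallest eigenvalue as infimum of the Rayleigh quotient over unit vectors. -/
noncomputable def lmin {n : ℕ}
    (A : EuclideanSpace ℝ (Fin n) →L[ℝ] EuclideanSpace ℝ (Fin n)) : ℝ :=
  ⨅ u : Metric.sphere (0 : EuclideanSpace ℝ (Fin n)) 1,
    ⟪(u : EuclideanSpace ℝ (Fin n)), A u⟫

/-- The Hessian of `J`, as the derivative of its gradient. -/
noncomputable def hess {n : ℕ} (J : EuclideanSpace ℝ (Fin n) → ℝ)
    (x : EuclideanSpace ℝ (Fin n)) :
    EuclideanSpace ℝ (Fin n) →L[ℝ] EuclideanSpace ℝ (Fin n) :=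
  fderiv ℝ (gradient J) x

/-! The smallest eigenvalue is `1`-Lipschitz in the operator norm, and the Hessian of
`J_λ` moves by at most `L_H ‖x - x'‖ + L_λ |λ - λ'|` in operator norm. Hence
`Λ(λ', x') ≥ Λ(λ, x) - (1 - ϱ) Λ(λ, x) = ϱ Λ(λ, x)`. -/

theorem abs_inner_apply_self_le_opNorm {F : Type*} [NormedAddCommGroup F]
    [InnerProductSpace ℝ F] (A : F →L[ℝ] F) {u : F} (hu : ‖u‖ = 1) :
    |⟪u, A u⟫| ≤ ‖A‖ :=
  calc |⟪u, A u⟫| ≤ ‖u‖ * ‖A u‖ := abs_real_inner_le_norm _ _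
    _ ≤ ‖u‖ * (‖A‖ * ‖u‖) := by gcongr; exact A.le_opNorm u
    _ = ‖A‖ := by rw [hu]; ring

section lmin

variable {n : ℕ}

local notation "E" => EuclideanSpace ℝ (Fin n)

theorem bddBelow_range_inner_apply_self (A : E →L[ℝ] E) :
    BddBelow (Set.range fun u : Metric.sphere (0 : E) 1 => ⟪(u : E), A u⟫) := by
  refine ⟨-‖A‖, ?_⟩
  rintro _ ⟨u, rfl⟩
  exact neg_le_of_abs_le (abs_inner_apply_self_le_opNorm A (norm_eq_of_mem_sphere u))

theorem lmin_sub_norm_sub_le (A B : E →L[ℝ] E) : lmin B - ‖A - B‖ ≤ lmin A := by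
  rcases isEmpty_or_nonempty (Metric.sphere (0 : E) 1) with h | h
  · -- only for `n = 0`, where both infima are the junk value `sInf ∅ = 0`
    simp [lmin, norm_nonneg]
  refine le_ciInf fun u => ?_
  have hB : lmin B ≤ ⟪(u : E), B u⟫ := ciInf_le (bddBelow_range_inner_apply_self B) u
  have hBA := le_abs_self ⟪(u : E), (B - A) u⟫
  have hnorm := abs_inner_apply_self_le_opNorm (B - A) (norm_eq_of_mem_sphere u)
  calc lmin B - ‖A - B‖ ≤ ⟪(u : E), B u⟫ - ⟪(u : E), (B - A) u⟫ := by
        rw [norm_sub_rev]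
        linarith
    _ = ⟪(u : E), A u⟫ := by
        rw [sub_apply, inner_sub_right]; ring

end lmin

theorem norm_convexComb_sub_convexComb_le {V : Type*} [SeminormedAddCommGroup V]
    [NormedSpace ℝ V] {a b a' b' : V} {t t' ε : ℝ} (ht' : t' ∈ Set.Icc (0 : ℝ) 1)
    (ha : ‖a' - a‖ ≤ ε) (hb : ‖b' - b‖ ≤ ε) :
    ‖((1 - t') • a' + t' • b') - ((1 - t) • a + t • b)‖ ≤ ε + (‖a‖ + ‖b‖) * |t - t'| := by
  obtain ⟨ht'0, ht'1⟩ := ht'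
  have hsplit : ((1 - t') • a' + t' • b') - ((1 - t) • a + t • b)
      = ((1 - t') • (a' - a) + t' • (b' - b)) + (t - t') • (a - b) := by
    module
  have hmove : ‖(1 - t') • (a' - a) + t' • (b' - b)‖ ≤ ε :=
    calc _ ≤ (1 - t') * ‖a' - a‖ + t' * ‖b' - b‖ := by
          grw [norm_add_le, norm_smul, norm_smul, Real.norm_of_nonneg (by linarith),
            Real.norm_of_nonneg ht'0]
      _ ≤ (1 - t') * ε + t' * ε := by gcongr
      _ = ε := by ring
  have hshift : ‖(t - t') • (a - b)‖ ≤ (‖a‖ + ‖b‖) * |t - t'| := by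
    rw [norm_smul, Real.norm_eq_abs, mul_comm]
    gcongr
    exact norm_sub_le a b
  rw [hsplit]
  grw [norm_add_le, hmove, hshift]

theorem stmt_3_general {n : ℕ} (J₀ J₁ : EuclideanSpace ℝ (Fin n) → ℝ)
    (x : EuclideanSpace ℝ (Fin n)) (δ L_H L_lam ϱ : ℝ)
    (hLip₀ : ∀ y ∈ Metric.ball x δ, ∀ y' ∈ Metric.ball x δ,
      ‖hess J₀ y - hess J₀ y'‖ ≤ L_H * ‖y - y'‖)
    (hLip₁ : ∀ y ∈ Metric.ball x δ, ∀ y' ∈ Metric.ball x δ,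
      ‖hess J₁ y - hess J₁ y'‖ ≤ L_H * ‖y - y'‖)
    (hLlam : L_lam = ‖hess J₀ x‖ + ‖hess J₁ x‖)
    (Λ : ℝ → EuclideanSpace ℝ (Fin n) → ℝ)
    (hΛ : ∀ lam y, Λ lam y = lmin ((1 - lam) • hess J₀ y + lam • hess J₁ y))
    (x' : EuclideanSpace ℝ (Fin n)) (hx' : x' ∈ Metric.ball x δ)
    (lam lam' : ℝ) (hlam' : lam' ∈ Set.Icc (0:ℝ) 1)
    (hkey : L_H * ‖x - x'‖ + L_lam * |lam - lam'| ≤ (1 - ϱ) * Λ lam x) :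
    Λ lam' x' ≥ ϱ * Λ lam x := by
  have hx : x ∈ Metric.ball x δ := Metric.mem_ball_self (Metric.pos_of_mem_ball hx')
  have hmove := norm_convexComb_sub_convexComb_le (t := lam) hlam'
    (hLip₀ x' hx' x hx) (hLip₁ x' hx' x hx)
  rw [norm_sub_rev x', ← hLlam] at hmove
  have hlmin := lmin_sub_norm_sub_le
    ((1 - lam') • hess J₀ x' + lam' • hess J₁ x') ((1 - lam) • hess J₀ x + lam • hess J₁ x)
  rw [hΛ lam x] at hkey
  rw [hΛ lam x, hΛ lam' x']
  linarith

theorem stmt_3 {n : ℕ} (J₀ J₁ : EuclideanSpace ℝ (Fin n) → ℝ)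
    (hJ₀ : ContDiff ℝ 2 J₀) (hJ₁ : ContDiff ℝ 2 J₁)
    (x : EuclideanSpace ℝ (Fin n)) (δ L_H L_lam ϱ : ℝ)
    (hLip₀ : ∀ y ∈ Metric.ball x δ, ∀ y' ∈ Metric.ball x δ,
      ‖hess J₀ y - hess J₀ y'‖ ≤ L_H * ‖y - y'‖)
    (hLip₁ : ∀ y ∈ Metric.ball x δ, ∀ y' ∈ Metric.ball x δ,
      ‖hess J₁ y - hess J₁ y'‖ ≤ L_H * ‖y - y'‖)
    (hLlam : L_lam = ‖hess J₀ x‖ + ‖hess J₁ x‖)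
    (Λ : ℝ → EuclideanSpace ℝ (Fin n) → ℝ)
    (hΛ : ∀ lam y, Λ lam y = lmin ((1 - lam) • hess J₀ y + lam • hess J₁ y))
    (hϱ0 : 0 < ϱ) (hϱ1 : ϱ < 1)
    (x' : EuclideanSpace ℝ (Fin n)) (hx' : x' ∈ Metric.ball x δ)
    (lam lam' : ℝ) (hlam : lam ∈ Set.Icc (0:ℝ) 1) (hlam' : lam' ∈ Set.Icc (0:ℝ) 1)
    (hkey : L_H * ‖x - x'‖ + L_lam * |lam - lam'| ≤ (1 - ϱ) * Λ lam x) :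
    Λ lam' x' ≥ ϱ * Λ lam x :=
  stmt_3_general J₀ J₁ x δ L_H L_lam ϱ hLip₀ hLip₁ hLlam Λ hΛ x' hx' lam lam' hlam' hkey
end

section
/- Let J₀, J₁ : ℝⁿ → ℝ be C¹ and λ ∈ (0,1). If x ∈ ℝⁿ satisfies ‖(1-λ)∇J₀(x) + λ∇J₁(x)‖ ≤ ε, then x is ε'-Pareto critical with ε' = ε / min{λ, 1-λ}; that is, there is no direction d ∈ ℝⁿ with ∇J₀(x)ᵀd ≤ -ε'‖d‖ and ∇J₁(x)ᵀd < 0, and no direction d with ∇J₁(x)ᵀd ≤ -ε'‖d‖ and ∇J₀(x)ᵀd < 0. -/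
open scoped RealInnerProductSpace

/- Pairing `d` with `a • v + b • w` gives, by Cauchy–Schwarz, at least `-ε ‖d‖`; but a direction
that is `ε'`-steep for `v` and descending for `w` makes it strictly less than `-a ε' ‖d‖ ≤ -ε ‖d‖`. -/
theorem not_exists_steep_descent_of_norm_smul_add_smul_le {E : Type*} [NormedAddCommGroup E]
    [InnerProductSpace ℝ E] {v w : E} {a b ε ε' : ℝ} (ha : 0 ≤ a) (hb : 0 < b)
    (hε : ‖a • v + b • w‖ ≤ ε) (hε' : ε ≤ a * ε') :
    ¬ ∃ d : E, ⟪v, d⟫ ≤ -ε' * ‖d‖ ∧ ⟪w, d⟫ < 0 := by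
  rintro ⟨d, hv, hw⟩
  have hlower : -(ε * ‖d‖) ≤ ⟪a • v + b • w, d⟫ :=
    calc -(ε * ‖d‖) ≤ -(‖a • v + b • w‖ * ‖d‖) := by gcongr
      _ ≤ ⟪a • v + b • w, d⟫ := neg_le_of_abs_le (abs_real_inner_le_norm _ _)
  have hexpand : ⟪a • v + b • w, d⟫ = a * ⟪v, d⟫ + b * ⟪w, d⟫ := by
    rw [inner_add_left, real_inner_smul_left, real_inner_smul_left]
  have hsteep : a * ⟪v, d⟫ ≤ -(ε * ‖d‖) :=
    calc a * ⟪v, d⟫ ≤ a * (-ε' * ‖d‖) := mul_le_mul_of_nonneg_left hv ha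
      _ = -(a * ε' * ‖d‖) := by ring
      _ ≤ -(ε * ‖d‖) := by gcongr
  nlinarith [mul_neg_of_pos_of_neg hb hw]

theorem le_mul_div_of_le {ε m c : ℝ} (hε : 0 ≤ ε) (hm : 0 < m) (hc : m ≤ c) :
    ε ≤ c * (ε / m) :=
  calc ε = c * (ε / c) := (mul_div_cancel₀ ε (hm.trans_le hc).ne').symm
    _ ≤ c * (ε / m) := by gcongr; linarith

theorem stmt_9_general {n : ℕ} (J₀ J₁ : EuclideanSpace ℝ (Fin n) → ℝ)
    (lam : ℝ) (hlam : lam ∈ Set.Ioo (0:ℝ) 1)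
    (x : EuclideanSpace ℝ (Fin n)) (ε ε' : ℝ)
    (hcrit : ‖(1 - lam) • gradient J₀ x + lam • gradient J₁ x‖ ≤ ε)
    (hε' : ε' = ε / min lam (1 - lam)) :
    (¬ ∃ d : EuclideanSpace ℝ (Fin n),
        ⟪gradient J₀ x, d⟫ ≤ -ε' * ‖d‖ ∧ ⟪gradient J₁ x, d⟫ < 0) ∧
    (¬ ∃ d : EuclideanSpace ℝ (Fin n),
        ⟪gradient J₁ x, d⟫ ≤ -ε' * ‖d‖ ∧ ⟪gradient J₀ x, d⟫ < 0) := by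
  obtain ⟨hlam₀, hlam₁⟩ := hlam
  have hmin : 0 < min lam (1 - lam) := lt_min hlam₀ (by linarith)
  have hε : 0 ≤ ε := (norm_nonneg _).trans hcrit
  subst hε'
  constructor
  · exact not_exists_steep_descent_of_norm_smul_add_smul_le (by linarith) hlam₀ hcrit
      (le_mul_div_of_le hε hmin (min_le_right _ _))
  · refine not_exists_steep_descent_of_norm_smul_add_smul_le (b := 1 - lam) hlam₀.le
      (by linarith) ?_ (le_mul_div_of_le hε hmin (min_le_left _ _))
    rwa [add_comm]

theorem stmt_9 {n : ℕ} (J₀ J₁ : EuclideanSpace ℝ (Fin n) → ℝ)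
    (hJ₀ : ContDiff ℝ 1 J₀) (hJ₁ : ContDiff ℝ 1 J₁)
    (lam : ℝ) (hlam : lam ∈ Set.Ioo (0:ℝ) 1)
    (x : EuclideanSpace ℝ (Fin n)) (ε ε' : ℝ)
    (hcrit : ‖(1 - lam) • gradient J₀ x + lam • gradient J₁ x‖ ≤ ε)
    (hε' : ε' = ε / min lam (1 - lam)) :
    (¬ ∃ d : EuclideanSpace ℝ (Fin n),
        ⟪gradient J₀ x, d⟫ ≤ -ε' * ‖d‖ ∧ ⟪gradient J₁ x, d⟫ < 0) ∧
    (¬ ∃ d : EuclideanSpace ℝ (Fin n),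
        ⟪gradient J₁ x, d⟫ ≤ -ε' * ‖d‖ ∧ ⟪gradient J₀ x, d⟫ < 0) :=
  stmt_9_general J₀ J₁ lam hlam x ε ε' hcrit hε'
end

section
/- Let Q₀, Q₁ be symmetric positive definite n×n matrices and χ₀, χ₁ ∈ ℝⁿ; define x(λ) = [(1-λ)Q₀ + λQ₁]⁻¹((1-λ)Q₀χ₀ + λQ₁χ₁). Then x is differentiable on [0,1] and satisfies the ODE ẋ(λ) = ((1-λ)Q₀ + λQ₁)⁻¹(Q₀(x(λ) − χ₀) − Q₁(x(λ) − χ₁)) with x(0) = χ₀ and x(1) = χ₁. -/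
/-!
Write `x(λ) = A(λ)⁻¹ b(λ)` with `A(λ) = (1-λ)Q₀ + λQ₁` and `b(λ) = (1-λ)Q₀χ₀ + λQ₁χ₁` affine in `λ`.
Positive definite matrices form a convex set, so `A(λ)` is invertible on `[0,1]`, and
differentiating `A x = b` gives `A ẋ = b' - A' x = Q₁χ₁ - Q₀χ₀ - (Q₁ - Q₀) x`, which is the ODE.
-/

open Matrix

-- The operator norm makes matrices a normed algebra, as the derivative of inversion requires.
attribute [local instance] Matrix.linftyOpNormedAddCommGroup Matrix.linftyOpNormedRing
  Matrix.linftyOpNormedAlgebra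

theorem Matrix.convex_posDef {m : Type*} [Fintype m] :
    Convex ℝ {M : Matrix m m ℝ | M.PosDef} := by
  intro A hA B hB a b ha hb hab
  rcases ha.lt_or_eq with ha | rfl
  · exact (hA.smul ha).add_posSemidef (hB.posSemidef.smul hb)
  · obtain rfl : b = 1 := by simpa using hab
    simpa using hB

section MatrixCalculus

variable {𝕜 : Type*} [RCLike 𝕜]
  {m : Type*} [Fintype m] [DecidableEq m]
  {A : 𝕜 → Matrix m m 𝕜} {A' : Matrix m m 𝕜} {b : 𝕜 → m → 𝕜} {b' : m → 𝕜} {t : 𝕜}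

theorem HasDerivAt.matrix_mulVec (hA : HasDerivAt A A' t) (hb : HasDerivAt b b' t) :
    HasDerivAt (fun s => A s *ᵥ b s) (A t *ᵥ b' + A' *ᵥ b t) t :=
  (mulVecBilin 𝕜 𝕜 : Matrix m m 𝕜 →ₗ[𝕜] _ →ₗ[𝕜] _).toContinuousBilinearMap.hasDerivAt_of_bilinear
    (fun _ => hA) (fun _ => hb)

theorem HasDerivAt.matrix_inv (hA : HasDerivAt A A' t) (hAt : IsUnit (A t)) :
    HasDerivAt (fun s => (A s)⁻¹) (-((A t)⁻¹ * A' * (A t)⁻¹)) t := by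
  have h := (hasFDerivAt_ringInverse (𝕜 := 𝕜) hAt.unit).comp_hasDerivAt_of_eq t hA
    hAt.unit_spec.symm
  simp only [Function.comp_def, ← nonsing_inv_eq_ringInverse] at h
  refine h.congr_deriv ?_
  simp [coe_units_inv]

theorem HasDerivAt.matrix_inv_mulVec (hA : HasDerivAt A A' t) (hb : HasDerivAt b b' t)
    (hAt : IsUnit (A t)) :
    HasDerivAt (fun s => (A s)⁻¹ *ᵥ b s) ((A t)⁻¹ *ᵥ (b' - A' *ᵥ ((A t)⁻¹ *ᵥ b t))) t := by
  convert (hA.matrix_inv hAt).matrix_mulVec hb using 1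
  rw [mulVec_sub, neg_mulVec, ← mulVec_mulVec, ← mulVec_mulVec, sub_eq_add_neg]

end MatrixCalculus

theorem stmt_14_general {n : ℕ} (Q₀ Q₁ : Matrix (Fin n) (Fin n) ℝ)
    (hQ₀ : Q₀.PosDef) (hQ₁ : Q₁.PosDef)
    (χ₀ χ₁ : Fin n → ℝ)
    (x : ℝ → (Fin n → ℝ))
    (hx : ∀ lam : ℝ, x lam = ((1 - lam) • Q₀ + lam • Q₁)⁻¹
        *ᵥ ((1 - lam) • (Q₀ *ᵥ χ₀) + lam • (Q₁ *ᵥ χ₁))) :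
    (∀ lam ∈ Set.Icc (0:ℝ) 1,
      ∃ d : Fin n → ℝ,
        HasDerivWithinAt x d (Set.Icc (0:ℝ) 1) lam ∧
        d = ((1 - lam) • Q₀ + lam • Q₁)⁻¹
            *ᵥ (Q₀ *ᵥ (x lam - χ₀) - Q₁ *ᵥ (x lam - χ₁))) ∧
    x 0 = χ₀ ∧ x 1 = χ₁ := by
  have hx_lineMap : x = fun lam => (AffineMap.lineMap Q₀ Q₁ lam)⁻¹
      *ᵥ AffineMap.lineMap (Q₀ *ᵥ χ₀) (Q₁ *ᵥ χ₁) lam := by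
    funext lam
    simp only [hx, AffineMap.lineMap_apply_module]
  refine ⟨fun lam hlam => ⟨_, ?_, rfl⟩, ?_, ?_⟩
  · have hunit : IsUnit ((1 - lam) • Q₀ + lam • Q₁) :=
      (convex_posDef hQ₀ hQ₁ (sub_nonneg.2 hlam.2) hlam.1 (sub_add_cancel 1 lam)).isUnit
    have hderiv :=
      (AffineMap.hasDerivAt_lineMap (a := Q₀) (b := Q₁) (x := lam)).matrix_inv_mulVec
      (AffineMap.hasDerivAt_lineMap (a := Q₀ *ᵥ χ₀) (b := Q₁ *ᵥ χ₁) (x := lam))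
      (by rwa [AffineMap.lineMap_apply_module])
    rw [hx_lineMap]
    refine (hderiv.congr_deriv ?_).hasDerivWithinAt
    simp only [AffineMap.lineMap_apply_module, ← hx, mulVec_sub, sub_mulVec]
    abel
  · simp [hx, nonsing_inv_mul _ ((isUnit_iff_isUnit_det Q₀).1 hQ₀.isUnit)]
  · simp [hx, nonsing_inv_mul _ ((isUnit_iff_isUnit_det Q₁).1 hQ₁.isUnit)]

theorem stmt_14 {n : ℕ} (Q₀ Q₁ : Matrix (Fin n) (Fin n) ℝ)
    (hQ₀sym : Q₀.IsSymm) (hQ₁sym : Q₁.IsSymm)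
    (hQ₀ : Q₀.PosDef) (hQ₁ : Q₁.PosDef)
    (χ₀ χ₁ : Fin n → ℝ)
    (x : ℝ → (Fin n → ℝ))
    (hx : ∀ lam : ℝ, x lam = ((1 - lam) • Q₀ + lam • Q₁)⁻¹
        *ᵥ ((1 - lam) • (Q₀ *ᵥ χ₀) + lam • (Q₁ *ᵥ χ₁))) :
    (∀ lam ∈ Set.Icc (0:ℝ) 1,
      ∃ d : Fin n → ℝ,
        HasDerivWithinAt x d (Set.Icc (0:ℝ) 1) lam ∧
        d = ((1 - lam) • Q₀ + lam • Q₁)⁻¹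
            *ᵥ (Q₀ *ᵥ (x lam - χ₀) - Q₁ *ᵥ (x lam - χ₁))) ∧
    x 0 = χ₀ ∧ x 1 = χ₁ :=
  stmt_14_general Q₀ Q₁ hQ₀ hQ₁ χ₀ χ₁ x hx
end
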